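/- arXiv:math/0010079 — 3 statements merged into one kernel-verified Lean document; each statement's English description precedes it below -/
import Mathlib

section
/- Let (U, U') be a finite-dimensional AH-module, i.e., U is a left ℍ-module, U' ⊆ U is a real subspace, U^† = {α ∈ U^× : α(u) ∈ 𝕀 for all u ∈ U'}, and for every u ∈ U, if α(u) = 0 for all α ∈ U^† then u = 0. Then dim_ℝ U' + dim_ℝ U^† = dim_ℝ U. -/
open Module

local notation "ℍ" => Quaternion ℝ

noncomputable section

/-- The imaginary quaternions, as a real subspace of `ℍ`. -/
def ImH : Submodule ℝ ℍ where
  carrier := {x | x.re = 0}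
  add_mem' := by
    intro a b ha hb
    simp only [Set.mem_setOf_eq] at *
    simp [ha, hb]
  zero_mem' := by simp; rfl
  smul_mem' := by
    intro c x hx
    simp only [Set.mem_setOf_eq] at *
    simp [hx]

variable {U : Type*} [AddCommGroup U] [Module ℝ U] [Module ℍ U]
variable {V : Type*} [AddCommGroup V] [Module ℝ V] [Module ℍ V]
variable {W : Type*} [AddCommGroup W] [Module ℝ W] [Module ℍ W]
variable {X : Type*} [AddCommGroup X] [Module ℝ X] [Module ℍ X]

/-- `U^†`: the real subspace of those real-linear maps `U → ℍ` that are `ℍ`-linear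
and map the distinguished subspace `U'` into the imaginary quaternions. -/
def AHDual (U' : Submodule ℝ U) : Submodule ℝ (U →ₗ[ℝ] ℍ) where
  carrier := {α | (∀ (c : ℍ) (u : U), α (c • u) = c * α u) ∧ ∀ u ∈ U', (α u).re = 0}
  zero_mem' := ⟨fun c u => by simp, fun u hu => by simp; rfl⟩
  add_mem' := by
    rintro a b ⟨ha1, ha2⟩ ⟨hb1, hb2⟩
    exact ⟨fun c u => by simp [ha1 c u, hb1 c u, mul_add],
           fun u hu => by simp [ha2 u hu, hb2 u hu]⟩
  smul_mem' := by
    rintro r α ⟨h1, h2⟩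
    refine ⟨fun c u => ?_, fun u hu => ?_⟩
    · simp [h1 c u, mul_smul_comm]
    · simp [h2 u hu]

/-- The AH-module condition: `U^†` separates points of `U`. -/
def IsAH (U' : Submodule ℝ U) : Prop :=
  ∀ u : U, (∀ α : U →ₗ[ℝ] ℍ, α ∈ AHDual U' → α u = 0) → u = 0

/-! Taking real parts identifies `ℍ`-linear maps `U → ℍ` with real linear forms on `U`: the inverse
`quaternionLift` is forced by `re (q * α u) = re (α (q • u))`, and `q ↦ re (q * x)` determines `x`
(test it against `1, i, j, k`). Under this identification `U^†` is the annihilator of `U'`, whose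
dimension is `dim U - dim U'`. -/

section QuaternionUnits
variable (R : Type*) [CommRing R]

@[simps] def quatI : Quaternion R := ⟨0, 1, 0, 0⟩
@[simps] def quatJ : Quaternion R := ⟨0, 0, 1, 0⟩
@[simps] def quatK : Quaternion R := ⟨0, 0, 0, 1⟩

variable {R}

theorem Quaternion.eq_re_smul_one_add_ijk (q : Quaternion R) :
    q = q.re • 1 + q.imI • quatI R + q.imJ • quatJ R + q.imK • quatK R := by
  ext <;> simp

theorem Quaternion.eq_of_forall_re_mul_eq {x y : Quaternion R}
    (h : ∀ q : Quaternion R, (q * x).re = (q * y).re) : x = y := by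
  ext
  · simpa using h 1
  · simpa [Quaternion.re_mul] using h (quatI R)
  · simpa [Quaternion.re_mul] using h (quatJ R)
  · simpa [Quaternion.re_mul] using h (quatK R)

end QuaternionUnits

section QuaternionLift
variable {R : Type*} [CommRing R] {M : Type*} [AddCommGroup M] [Module R M] [Module (Quaternion R) M]
  [IsScalarTower R (Quaternion R) M]

def quaternionLift (f : Dual R M) : M →ₗ[R] Quaternion R where
  toFun u := f u • 1 - f (quatI R • u) • quatI R - f (quatJ R • u) • quatJ R -
    f (quatK R • u) • quatK R
  map_add' u v := by simp only [smul_add, map_add, add_smul]; abel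
  map_smul' r u := by
    simp only [smul_comm _ r, map_smul, smul_eq_mul, mul_smul, RingHom.id_apply]; module

theorem re_mul_quaternionLift (f : Dual R M) (q : Quaternion R) (u : M) :
    (q * quaternionLift f u).re = f (q • u) := by
  conv_rhs => rw [q.eq_re_smul_one_add_ijk]
  simp [quaternionLift, add_smul, smul_assoc, Quaternion.re_mul, mul_sub, mul_comm]

theorem re_quaternionLift (f : Dual R M) (u : M) : (quaternionLift f u).re = f u := by
  simpa using re_mul_quaternionLift f 1 u

theorem quaternionLift_smul (f : Dual R M) (c : Quaternion R) (u : M) :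
    quaternionLift f (c • u) = c * quaternionLift f u :=
  Quaternion.eq_of_forall_re_mul_eq fun q => by
    rw [re_mul_quaternionLift, ← mul_assoc, re_mul_quaternionLift, mul_smul]

theorem quaternionLift_eq_of_re_eq {f : Dual R M} {α : M →ₗ[R] Quaternion R}
    (hα : ∀ (c : Quaternion R) (u : M), α (c • u) = c * α u) (hf : ∀ u, (α u).re = f u) :
    quaternionLift f = α :=
  LinearMap.ext fun u => Quaternion.eq_of_forall_re_mul_eq fun q => by
    rw [re_mul_quaternionLift, ← hf, hα]

end QuaternionLift

def ahDualEquivDualAnnihilator [IsScalarTower ℝ ℍ U] (U' : Submodule ℝ U) :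
    AHDual U' ≃ₗ[ℝ] U'.dualAnnihilator where
  toFun α := ⟨(show ℍ →ₗ[ℝ] ℝ from QuaternionAlgebra.reₗ _ _ _) ∘ₗ α.1,
    (Submodule.mem_dualAnnihilator _).mpr α.2.2⟩
  map_add' _ _ := rfl
  map_smul' _ _ := rfl
  invFun f := ⟨quaternionLift f.1, quaternionLift_smul f.1, fun u hu => by
    rw [re_quaternionLift]
    exact (Submodule.mem_dualAnnihilator _).mp f.2 u hu⟩
  left_inv α := Subtype.ext (quaternionLift_eq_of_re_eq α.2.1 fun _ => rfl)
  right_inv f := Subtype.ext (LinearMap.ext (re_quaternionLift f.1))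

theorem ahModule_dim_prime_add_dim_dagger_general
    (U' : Submodule ℝ U) [IsScalarTower ℝ ℍ U] [FiniteDimensional ℝ U] :
    finrank ℝ ↥U' + finrank ℝ ↥(AHDual U') = finrank ℝ U := by
  rw [(ahDualEquivDualAnnihilator U').finrank_eq]
  exact Subspace.finrank_add_finrank_dualAnnihilator_eq U'

/-- For a finite-dimensional AH-module `(U, U')`,
`dim_ℝ U' + dim_ℝ U^† = dim_ℝ U`. -/
theorem ahModule_dim_prime_add_dim_dagger
    (U' : Submodule ℝ U) [IsScalarTower ℝ ℍ U] [FiniteDimensional ℝ U]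
    (hAH : IsAH U') :
    finrank ℝ ↥U' + finrank ℝ ↥(AHDual U') = finrank ℝ U :=
  ahModule_dim_prime_add_dim_dagger_general U'

end
end

section
/- Let (U,U') and (V,V') be AH-modules, and let u ∈ U, v ∈ V be nonzero elements such that α(u)·β(v) = β(v)·α(u) in ℍ for every α ∈ U^† and β ∈ V^†. Define an element u ⊗_ℍ v of ℍ ⊗ (U^†)^* ⊗ (V^†)^* by (u ⊗_ℍ v)(α ⊗ β) = α(u)·β(v). Then u ⊗_ℍ v is a nonzero element of the quaternionic tensor product U ⊗_ℍ V. -/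
open Module

local notation "ℍ" => Quaternion ℝ

noncomputable section

variable {U : Type*} [AddCommGroup U] [Module ℝ U] [Module ℍ U]
variable {V : Type*} [AddCommGroup V] [Module ℝ V] [Module ℍ V]
variable {W : Type*} [AddCommGroup W] [Module ℝ W] [Module ℍ W]
variable {X : Type*} [AddCommGroup X] [Module ℝ X] [Module ℍ X]

/-- The map `ι_U : U → ((U^†) →ₗ ℍ)`, `ι_U(u)(α) = α(u)`. -/
def iotaAH (U' : Submodule ℝ U) : U →ₗ[ℝ] (↥(AHDual U') →ₗ[ℝ] ℍ) where
  toFun u :=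
    { toFun := fun α => (α : U →ₗ[ℝ] ℍ) u
      map_add' := fun a b => rfl
      map_smul' := fun r a => rfl }
  map_add' := fun u v => LinearMap.ext fun α => by simp
  map_smul' := fun r u => LinearMap.ext fun α => by simp

@[simp] theorem iotaAH_apply (U' : Submodule ℝ U) (u : U) (α : ↥(AHDual U')) :
    iotaAH U' u α = (α : U →ₗ[ℝ] ℍ) u := rfl

/-- The quaternionic tensor product `U ⊗_ℍ V`, realised as the subspace of real-bilinear
maps `U^† × V^† → ℍ` all of whose slices lie in `ι_U(U)` resp. `ι_V(V)`. -/
def QTP (U' : Submodule ℝ U) (V' : Submodule ℝ V) :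
    Submodule ℝ (↥(AHDual U') →ₗ[ℝ] ↥(AHDual V') →ₗ[ℝ] ℍ) where
  carrier := {B | (∀ β, ∃ u : U, ∀ α, B α β = iotaAH U' u α) ∧
                  (∀ α, ∃ v : V, ∀ β, B α β = iotaAH V' v β)}
  zero_mem' :=
    ⟨fun β => ⟨0, fun α => by simp⟩, fun α => ⟨0, fun β => by simp⟩⟩
  add_mem' := by
    rintro B C ⟨hB1, hB2⟩ ⟨hC1, hC2⟩
    refine ⟨fun β => ?_, fun α => ?_⟩
    · obtain ⟨u, hu⟩ := hB1 β; obtain ⟨u', hu'⟩ := hC1 β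
      exact ⟨u + u', fun α => by simp [hu α, hu' α]⟩
    · obtain ⟨v, hv⟩ := hB2 α; obtain ⟨v', hv'⟩ := hC2 α
      exact ⟨v + v', fun β => by simp [hv β, hv' β]⟩
  smul_mem' := by
    rintro r B ⟨h1, h2⟩
    refine ⟨fun β => ?_, fun α => ?_⟩
    · obtain ⟨u, hu⟩ := h1 β; exact ⟨r • u, fun α => by simp [hu α]⟩
    · obtain ⟨v, hv⟩ := h2 α; exact ⟨r • v, fun β => by simp [hv β]⟩

/-- The left action of a quaternion `c` on the ambient space of `U ⊗_ℍ V`. -/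
def hsmulBil (U' : Submodule ℝ U) (V' : Submodule ℝ V) (c : ℍ) :
    (↥(AHDual U') →ₗ[ℝ] ↥(AHDual V') →ₗ[ℝ] ℍ) →ₗ[ℝ]
      (↥(AHDual U') →ₗ[ℝ] ↥(AHDual V') →ₗ[ℝ] ℍ) where
  toFun B :=
    { toFun := fun α =>
        { toFun := fun β => c * B α β
          map_add' := fun b b' => by simp [mul_add]
          map_smul' := fun r b => by simp [mul_smul_comm] }
      map_add' := fun a a' => LinearMap.ext fun β => by simp [mul_add]
      map_smul' := fun r a => LinearMap.ext fun β => by simp [mul_smul_comm] }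
  map_add' := fun B B' => LinearMap.ext fun α => LinearMap.ext fun β => by simp [mul_add]
  map_smul' := fun r B => LinearMap.ext fun α => LinearMap.ext fun β => by simp [mul_smul_comm]

@[simp] theorem hsmulBil_apply (U' : Submodule ℝ U) (V' : Submodule ℝ V) (c : ℍ)
    (B : ↥(AHDual U') →ₗ[ℝ] ↥(AHDual V') →ₗ[ℝ] ℍ) (α : ↥(AHDual U')) (β : ↥(AHDual V')) :
    hsmulBil U' V' c B α β = c * B α β := rfl

theorem hsmulBil_mem {U' : Submodule ℝ U} {V' : Submodule ℝ V} (c : ℍ)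
    {B : ↥(AHDual U') →ₗ[ℝ] ↥(AHDual V') →ₗ[ℝ] ℍ} (hB : B ∈ QTP U' V') :
    hsmulBil U' V' c B ∈ QTP U' V' := by
  obtain ⟨h1, h2⟩ := hB
  constructor
  · intro β
    obtain ⟨u, hu⟩ := h1 β
    refine ⟨c • u, fun α => ?_⟩
    have hα : (α : U →ₗ[ℝ] ℍ) (c • u) = c * (α : U →ₗ[ℝ] ℍ) u := α.2.1 c u
    rw [hsmulBil_apply, hu α, iotaAH_apply, iotaAH_apply, hα]
  · intro α
    obtain ⟨v, hv⟩ := h2 α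
    refine ⟨c • v, fun β => ?_⟩
    have hβ : (β : V →ₗ[ℝ] ℍ) (c • v) = c * (β : V →ₗ[ℝ] ℍ) v := β.2.1 c v
    rw [hsmulBil_apply, hv β, iotaAH_apply, iotaAH_apply, hβ]

/-- The primed part of `U ⊗_ℍ V` (the intersection with `𝕀 ⊗ (U^†)^* ⊗ (V^†)^*`). -/
def QTPprimeSet (U' : Submodule ℝ U) (V' : Submodule ℝ V) : Set ↥(QTP U' V') :=
  {x | ∀ (α : ↥(AHDual U')) (β : ↥(AHDual V')),
    (((x : ↥(AHDual U') →ₗ[ℝ] ↥(AHDual V') →ₗ[ℝ] ℍ)) α β).re = 0}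

/-- `X_q'`: the real subspace of quaternions anticommuting with `q`. -/
def XqP (q : ℍ) : Submodule ℝ ℍ where
  carrier := {p | p * q = -(q * p)}
  zero_mem' := by simp
  add_mem' := by
    intro a b ha hb
    simp only [Set.mem_setOf_eq] at *
    rw [add_mul, mul_add, ha, hb, neg_add]
  smul_mem' := by
    intro r p hp
    simp only [Set.mem_setOf_eq] at *
    rw [smul_mul_assoc, hp, mul_smul_comm, smul_neg]

theorem XqP_le_im {q : ℍ} (hq : q.re = 0) (hq0 : q ≠ 0) :
    ∀ p ∈ XqP q, p.re = 0 := by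
  intro p hp
  have h : p * q + q * p = 0 := by
    have h' : p * q = -(q * p) := hp
    rw [h', neg_add_cancel]
  have e1 : p.re * q.imI = 0 := by
    have := congrArg QuaternionAlgebra.imI h
    simp only [Quaternion.imI_add, Quaternion.imI_mul, Quaternion.imI_zero, hq] at this
    linarith
  have e2 : p.re * q.imJ = 0 := by
    have := congrArg QuaternionAlgebra.imJ h
    simp only [Quaternion.imJ_add, Quaternion.imJ_mul, Quaternion.imJ_zero, hq] at this
    linarith
  have e3 : p.re * q.imK = 0 := by
    have := congrArg QuaternionAlgebra.imK h
    simp only [Quaternion.imK_add, Quaternion.imK_mul, Quaternion.imK_zero, hq] at this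
    linarith
  by_contra hpre
  apply hq0
  ext
  · exact hq
  · exact (mul_eq_zero.mp e1).resolve_left hpre
  · exact (mul_eq_zero.mp e2).resolve_left hpre
  · exact (mul_eq_zero.mp e3).resolve_left hpre

open Classical in
/-- The identity map `ℍ → ℍ`, as an element of `(X_q)^†` (junk value if `q` is not
a nonzero imaginary quaternion). -/
def idXqDual (q : ℍ) : ↥(AHDual (XqP q)) :=
  if h : q.re = 0 ∧ q ≠ 0 then
    ⟨(LinearMap.id : ℍ →ₗ[ℝ] ℍ),
      ⟨fun c u => by simp [smul_eq_mul], fun u hu => XqP_le_im h.1 h.2 u hu⟩⟩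
  else 0

/-- The image of `id ⊗_ℍ χ_q : U ⊗_ℍ X_q → U` inside `U`. -/
def chiImage (U' : Submodule ℝ U) (q : ℍ) : Set U :=
  {u | ∃ B ∈ QTP U' (XqP q), ∀ α : ↥(AHDual U'), B α (idXqDual q) = iotaAH U' u α}

/-- A (finite-dimensional) AH-module is semistable if it is generated as an `ℍ`-module by
the images of the maps `id ⊗_ℍ χ_q` over all nonzero imaginary `q`. -/
def Semistable (U' : Submodule ℝ U) : Prop :=
  Submodule.span ℍ (⋃ q ∈ {q : ℍ | q.re = 0 ∧ q ≠ 0}, chiImage U' q) = ⊤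

/-- `U ⊗_ℍ X_q` is AH-isomorphic to the direct sum of `n` copies of `X_q`. -/
def AHIsoNXq (U' : Submodule ℝ U) (q : ℍ) (n : ℕ) : Prop :=
  ∃ e : ↥(QTP U' (XqP q)) ≃ₗ[ℝ] (Fin n → ℍ),
    (∀ (c : ℍ) (x : ↥(QTP U' (XqP q))),
      e ⟨hsmulBil U' (XqP q) c ↑x, hsmulBil_mem c x.2⟩ = c • e x) ∧
    ((fun x => e x) '' QTPprimeSet U' (XqP q) = {f : Fin n → ℍ | ∀ i, f i ∈ XqP q})

/-- A stable AH-module with virtual dimension `r`. -/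
def Stable (U' : Submodule ℝ U) (r : ℕ) : Prop :=
  Semistable U' ∧ ∀ q : ℍ, q.re = 0 → q ≠ 0 → AHIsoNXq U' q r

/-- A stable AH-module (existentially quantified virtual dimension). -/
def IsStable (U' : Submodule ℝ U) : Prop :=
  Semistable U' ∧ ∃ j r : ℕ, finrank ℝ U = 4 * j ∧ finrank ℝ ↥U' = 2 * j + r ∧
    ∀ q : ℍ, q.re = 0 → q ≠ 0 → AHIsoNXq U' q r

/-- The dual `φ^× : V^† → U^†` of an AH-morphism `φ : U → V`. -/
def dualPull (U' : Submodule ℝ U) (V' : Submodule ℝ V) (φ : U →ₗ[ℝ] V)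
    (hφH : ∀ (c : ℍ) (u : U), φ (c • u) = c • φ u) (hφ' : ∀ u ∈ U', φ u ∈ V') :
    ↥(AHDual V') →ₗ[ℝ] ↥(AHDual U') where
  toFun γ := ⟨(γ : V →ₗ[ℝ] ℍ).comp φ,
    ⟨fun c u => by simp [hφH c u, γ.2.1], fun u hu => γ.2.2 _ (hφ' u hu)⟩⟩
  map_add' := fun a b => Subtype.ext (LinearMap.ext fun u => by simp)
  map_smul' := fun r a => Subtype.ext (LinearMap.ext fun u => by simp)


/-- The element `u ⊗_ℍ v` of `ℍ ⊗ (U^†)^* ⊗ (V^†)^*`, `(u ⊗_ℍ v)(α ⊗ β) = α(u)·β(v)`. -/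
def tensorElt (U' : Submodule ℝ U) (V' : Submodule ℝ V) (u : U) (v : V) :
    ↥(AHDual U') →ₗ[ℝ] ↥(AHDual V') →ₗ[ℝ] ℍ where
  toFun α :=
    { toFun := fun β => (α : U →ₗ[ℝ] ℍ) u * (β : V →ₗ[ℝ] ℍ) v
      map_add' := fun a b => by simp [mul_add]
      map_smul' := fun r a => by simp [mul_smul_comm] }
  map_add' := fun a b => LinearMap.ext fun β => by simp [add_mul]
  map_smul' := fun r a => LinearMap.ext fun β => by simp [smul_mul_assoc]

/-!
For fixed `α` the slice `β ↦ α(u)·β(v)` of `u ⊗_ℍ v` is `ι_V(α(u)·v)` by `ℍ`-linearity of `β`;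
for fixed `β` the slice `α ↦ α(u)·β(v)` equals `α ↦ β(v)·α(u)`, which is `ι_U(β(v)·u)`, and this
is where the commutation hypothesis enters. The element is nonzero since the AH-condition gives
`α`, `β` with `α(u) ≠ 0` and `β(v) ≠ 0`, and `ℍ` has no zero divisors.
-/

theorem AHDual.map_smul {U' : Submodule ℝ U} {α : U →ₗ[ℝ] ℍ} (hα : α ∈ AHDual U') (c : ℍ)
    (u : U) : α (c • u) = c * α u :=
  hα.1 c u

theorem IsAH.exists_apply_ne_zero {U' : Submodule ℝ U} (hU : IsAH U') {u : U} (hu : u ≠ 0) :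
    ∃ α ∈ AHDual U', α u ≠ 0 := by
  by_contra! h
  exact hu (hU u h)

@[simp] theorem tensorElt_apply (U' : Submodule ℝ U) (V' : Submodule ℝ V) (u : U) (v : V)
    (α : ↥(AHDual U')) (β : ↥(AHDual V')) :
    tensorElt U' V' u v α β = (α : U →ₗ[ℝ] ℍ) u * (β : V →ₗ[ℝ] ℍ) v :=
  rfl

theorem tensorElt_apply_eq_iotaAH_right (U' : Submodule ℝ U) (V' : Submodule ℝ V) (u : U)
    (v : V) (α : ↥(AHDual U')) (β : ↥(AHDual V')) :
    tensorElt U' V' u v α β = iotaAH V' ((α : U →ₗ[ℝ] ℍ) u • v) β := by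
  rw [tensorElt_apply, iotaAH_apply, AHDual.map_smul β.2]

theorem tensorElt_apply_eq_iotaAH_left (U' : Submodule ℝ U) (V' : Submodule ℝ V) {u : U}
    {v : V} {α : ↥(AHDual U')} {β : ↥(AHDual V')}
    (hcomm : (α : U →ₗ[ℝ] ℍ) u * (β : V →ₗ[ℝ] ℍ) v = (β : V →ₗ[ℝ] ℍ) v * (α : U →ₗ[ℝ] ℍ) u) :
    tensorElt U' V' u v α β = iotaAH U' ((β : V →ₗ[ℝ] ℍ) v • u) α := by
  rw [tensorElt_apply, iotaAH_apply, AHDual.map_smul α.2, hcomm]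

theorem tensorElt_mem_QTP {U' : Submodule ℝ U} {V' : Submodule ℝ V} {u : U} {v : V}
    (hcomm : ∀ α ∈ AHDual U', ∀ β ∈ AHDual V', α u * β v = β v * α u) :
    tensorElt U' V' u v ∈ QTP U' V' :=
  ⟨fun β => ⟨_, fun α => tensorElt_apply_eq_iotaAH_left U' V' (hcomm α α.2 β β.2)⟩,
    fun α => ⟨_, tensorElt_apply_eq_iotaAH_right U' V' u v α⟩⟩

theorem tensorElt_ne_zero {U' : Submodule ℝ U} {V' : Submodule ℝ V} (hU : IsAH U')
    (hV : IsAH V') {u : U} {v : V} (hu : u ≠ 0) (hv : v ≠ 0) :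
    tensorElt U' V' u v ≠ 0 := by
  obtain ⟨α, hα, hαu⟩ := hU.exists_apply_ne_zero hu
  obtain ⟨β, hβ, hβv⟩ := hV.exists_apply_ne_zero hv
  intro h
  have hαβ : tensorElt U' V' u v ⟨α, hα⟩ ⟨β, hβ⟩ = 0 := by simp [h]
  exact mul_ne_zero hαu hβv hαβ

/-- If `u ∈ U`, `v ∈ V` are nonzero and `α(u)` commutes with `β(v)` for
all `α ∈ U^†`, `β ∈ V^†`, then `u ⊗_ℍ v` is a nonzero element of `U ⊗_ℍ V`. -/
theorem tensorElt_mem_and_ne_zero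
    (U' : Submodule ℝ U) (V' : Submodule ℝ V) (hU : IsAH U') (hV : IsAH V')
    (u : U) (v : V) (hu : u ≠ 0) (hv : v ≠ 0)
    (hcomm : ∀ α ∈ AHDual U', ∀ β ∈ AHDual V', α u * β v = β v * α u) :
    tensorElt U' V' u v ∈ QTP U' V' ∧ tensorElt U' V' u v ≠ 0 :=
  ⟨tensorElt_mem_QTP hcomm, tensorElt_ne_zero hU hV hu hv⟩

end
end

section
/- Let Y = {(q₁,q₂,q₃) ∈ ℍ³ : q₁i + q₂j + q₃k = 0} with Y' = {(q₁,q₂,q₃) ∈ Y : each qₘ ∈ 𝕀}. Then Y is an ℍ-submodule of ℍ³ isomorphic to ℍ², dim_ℝ Y' = 5, and the map ν(q₁,q₂,q₃) = i q₁ + j q₂ + k q₃ has image 𝕀 and kernel exactly Y'. -/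
open Module

local notation "ℍ" => Quaternion ℝ

noncomputable section

def qi : ℍ := ⟨0, 1, 0, 0⟩
def qj : ℍ := ⟨0, 0, 1, 0⟩
def qk : ℍ := ⟨0, 0, 0, 1⟩

/-- `Y = {(q₁,q₂,q₃) ∈ ℍ³ : q₁ i + q₂ j + q₃ k = 0}` is a left `ℍ`-submodule of `ℍ³`. -/
def Ysub : Submodule ℍ (Fin 3 → ℍ) where
  carrier := {f | f 0 * qi + f 1 * qj + f 2 * qk = 0}
  zero_mem' := by simp
  add_mem' := by
    intro a b ha hb
    simp only [Set.mem_setOf_eq, Pi.add_apply] at *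
    rw [add_mul, add_mul, add_mul]
    rw [show a 0 * qi + b 0 * qi + (a 1 * qj + b 1 * qj) + (a 2 * qk + b 2 * qk)
          = (a 0 * qi + a 1 * qj + a 2 * qk) + (b 0 * qi + b 1 * qj + b 2 * qk) by abel]
    rw [ha, hb, add_zero]
  smul_mem' := by
    intro c f hf
    simp only [Set.mem_setOf_eq, Pi.smul_apply, smul_eq_mul] at *
    rw [mul_assoc, mul_assoc, mul_assoc, ← mul_add, ← mul_add, hf, mul_zero]

/-- `Y' = {(q₁,q₂,q₃) ∈ Y : each qₘ imaginary}`, a real subspace of `ℍ³`. -/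
def YsubP : Submodule ℝ (Fin 3 → ℍ) where
  carrier := {f | f 0 * qi + f 1 * qj + f 2 * qk = 0 ∧ ∀ m, (f m).re = 0}
  zero_mem' := by constructor <;> simp <;> rfl
  add_mem' := by
    rintro a b ⟨ha1, ha2⟩ ⟨hb1, hb2⟩
    refine ⟨?_, fun m => ?_⟩
    · simp only [Pi.add_apply]
      rw [add_mul, add_mul, add_mul]
      rw [show a 0 * qi + b 0 * qi + (a 1 * qj + b 1 * qj) + (a 2 * qk + b 2 * qk)
            = (a 0 * qi + a 1 * qj + a 2 * qk) + (b 0 * qi + b 1 * qj + b 2 * qk) by abel]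
      rw [ha1, hb1, add_zero]
    · simp [ha2 m, hb2 m]
  smul_mem' := by
    rintro r f ⟨h1, h2⟩
    refine ⟨?_, fun m => ?_⟩
    · simp only [Pi.smul_apply]
      rw [smul_mul_assoc, smul_mul_assoc, smul_mul_assoc, ← smul_add, ← smul_add, h1, smul_zero]
    · simp [h2 m]

/-- `ν(q₁,q₂,q₃) = i q₁ + j q₂ + k q₃`. -/
def nuY (f : Fin 3 → ℍ) : ℍ := qi * f 0 + qj * f 1 + qk * f 2

/-!
Since `k` is invertible, `q₃ = -(q₁ i + q₂ j) k⁻¹` is determined by `(q₁, q₂)`, which is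
arbitrary; this gives `Y ≅ ℍ²`.

For `e ∈ {i, j, k}` one has `e q + q e = 2 (re q) e + 2 re (e q)`. Adding the defining relation
`q₁ i + q₂ j + q₃ k = 0` of `Y` to `ν(q)` therefore gives, on `Y`,
`ν(q) = 2 (re q₁ i + re q₂ j + re q₃ k)`, the real part `2 re ν(q)` vanishing because
`re ν(q) = re (q₁ i + q₂ j + q₃ k) = 0` (as `re (p q) = re (q p)`). So `ν(Y) ⊆ 𝕀`, the kernel
of `ν` on `Y` is `Y'`, and `ν(Y) = 𝕀` because the real parts of a point of `Y` can be prescribed.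

Writing `qₘ = Σₙ aₘₙ eₙ` with `(e₁, e₂, e₃) = (i, j, k)`, a triple of imaginary quaternions lies
in `Y` iff the real matrix `(aₘₙ)` is symmetric and traceless, so `dim_ℝ Y' = 5`.
-/

section Ring

variable {R : Type*} [Ring R]

def equivFinTwoOfMemIff (a b : R) (c : Rˣ) (S : Submodule R (Fin 3 → R))
    (hS : ∀ f, f ∈ S ↔ f 0 * a + f 1 * b + f 2 * c = 0) : S ≃ₗ[R] (Fin 2 → R) where
  toFun f := ![f.1 0, f.1 1]
  map_add' f g := by ext m; fin_cases m <;> rfl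
  map_smul' r f := by ext m; fin_cases m <;> rfl
  invFun g := ⟨![g 0, g 1, -(g 0 * a + g 1 * b) * ↑c⁻¹], by simp [hS, mul_assoc]⟩
  left_inv f := by
    have h := (hS f).1 f.2
    ext m
    fin_cases m
    · rfl
    · rfl
    · simp [eq_neg_of_add_eq_zero_left h, mul_assoc]
  right_inv g := by ext m; fin_cases m <;> rfl

end Ring

/- Unfolding `qi` would leave a `QuaternionAlgebra.mk`, on which the `Quaternion` simp lemmas do
not fire; hence the component lemmas below. `Quaternion.re_zero` etc. are scoped simp lemmas,
and opening their scope would clash with the notation `ℍ`. -/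
attribute [local simp] Quaternion.re_zero Quaternion.imI_zero Quaternion.imJ_zero
  Quaternion.imK_zero

@[simp] lemma qi_re : qi.re = 0 := rfl
@[simp] lemma qi_imI : qi.imI = 1 := rfl
@[simp] lemma qi_imJ : qi.imJ = 0 := rfl
@[simp] lemma qi_imK : qi.imK = 0 := rfl
@[simp] lemma qj_re : qj.re = 0 := rfl
@[simp] lemma qj_imI : qj.imI = 0 := rfl
@[simp] lemma qj_imJ : qj.imJ = 1 := rfl
@[simp] lemma qj_imK : qj.imK = 0 := rfl
@[simp] lemma qk_re : qk.re = 0 := rfl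
@[simp] lemma qk_imI : qk.imI = 0 := rfl
@[simp] lemma qk_imJ : qk.imJ = 0 := rfl
@[simp] lemma qk_imK : qk.imK = 1 := rfl

lemma mem_Ysub_iff {f : Fin 3 → ℍ} : f ∈ Ysub ↔ (f 0).imI + (f 1).imJ + (f 2).imK = 0 ∧
    (f 0).re - (f 1).imK + (f 2).imJ = 0 ∧ (f 0).imK + (f 1).re - (f 2).imI = 0 ∧
    -(f 0).imJ + (f 1).imI + (f 2).re = 0 := by
  show f 0 * qi + f 1 * qj + f 2 * qk = 0 ↔ _
  simp only [Quaternion.ext_iff]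
  simp
  constructor <;> rintro ⟨h1, h2, h3, h4⟩ <;> refine ⟨?_, ?_, ?_, ?_⟩ <;> linarith

lemma mem_YsubP_iff {f : Fin 3 → ℍ} : f ∈ YsubP ↔ f ∈ Ysub ∧ ∀ m, (f m).re = 0 := Iff.rfl

lemma nuY_of_mem_Ysub {f : Fin 3 → ℍ} (hf : f ∈ Ysub) :
    nuY f = (2 : ℝ) • ((f 0).re • qi + (f 1).re • qj + (f 2).re • qk) := by
  obtain ⟨h1, h2, h3, h4⟩ := mem_Ysub_iff.1 hf
  simp only [nuY, Quaternion.ext_iff]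
  simp
  refine ⟨?_, ?_, ?_, ?_⟩ <;> linarith

lemma nuY_eq_zero_iff {f : Fin 3 → ℍ} (hf : f ∈ Ysub) : nuY f = 0 ↔ ∀ m, (f m).re = 0 := by
  simp [nuY_of_mem_Ysub hf, Quaternion.ext_iff, Fin.forall_fin_succ]

lemma exists_mem_Ysub_re (r : Fin 3 → ℝ) : ∃ f ∈ Ysub, ∀ m, (f m).re = r m := by
  -- the point of `Y` over `(r 0 + r 2 j, r 1) ∈ ℍ²`
  refine ⟨![r 0 + r 2 • qj, (r 1 : ℍ), r 2 + r 1 • qi - r 0 • qj], ?_, ?_⟩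
  · rw [mem_Ysub_iff]
    simp
  · simp [Fin.forall_fin_succ]

lemma image_nuY_Ysub : nuY '' (Ysub : Set (Fin 3 → ℍ)) = {x : ℍ | x.re = 0} := by
  ext x
  constructor
  · rintro ⟨f, hf, rfl⟩
    simp [nuY_of_mem_Ysub hf]
  · intro (hx : x.re = 0)
    obtain ⟨f, hf, hre⟩ := exists_mem_Ysub_re ![x.imI / 2, x.imJ / 2, x.imK / 2]
    refine ⟨f, hf, ?_⟩
    simp only [nuY_of_mem_Ysub hf, hre, Quaternion.ext_iff]
    simp [hx, mul_div_cancel₀]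

def tracelessSymmParam : (Fin 5 → ℝ) →ₗ[ℝ] (Fin 3 → ℍ) where
  toFun v := ![v 0 • qi + v 1 • qj + v 2 • qk, v 1 • qi + v 3 • qj + v 4 • qk,
    v 2 • qi + v 4 • qj - (v 0 + v 3) • qk]
  map_add' v w := by
    funext m
    fin_cases m <;> simp <;> module
  map_smul' r v := by
    funext m
    fin_cases m <;> simp <;> module

def tracelessSymmCoords (f : Fin 3 → ℍ) : Fin 5 → ℝ :=
  ![(f 0).imI, (f 0).imJ, (f 0).imK, (f 1).imJ, (f 1).imK]

lemma tracelessSymmCoords_tracelessSymmParam (v : Fin 5 → ℝ) :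
    tracelessSymmCoords (tracelessSymmParam v) = v := by
  ext m
  fin_cases m <;> simp [tracelessSymmCoords, tracelessSymmParam]

lemma range_tracelessSymmParam : LinearMap.range tracelessSymmParam = YsubP := by
  ext f
  rw [mem_YsubP_iff, mem_Ysub_iff]
  constructor
  · rintro ⟨v, rfl⟩
    simp [tracelessSymmParam, Fin.forall_fin_succ]
  · rintro ⟨⟨h1, h2, h3, h4⟩, hre⟩
    refine ⟨tracelessSymmCoords f, funext fun m => ?_⟩
    fin_cases m <;> simp [tracelessSymmCoords, tracelessSymmParam, Quaternion.ext_iff] <;>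
      and_intros <;> linarith [hre 0, hre 1, hre 2]

theorem finrank_YsubP : finrank ℝ YsubP = 5 := by
  have hinj : Function.Injective tracelessSymmParam :=
    Function.LeftInverse.injective tracelessSymmCoords_tracelessSymmParam
  rw [← range_tracelessSymmParam, LinearMap.finrank_range_of_inj hinj, Module.finrank_fin_fun]

/-- `Y` is an `ℍ`-submodule of `ℍ³` isomorphic to `ℍ²`,
`dim_ℝ Y' = 5`, and `ν` has image the imaginary quaternions and kernel exactly `Y'`. -/
theorem Y_module_structure :
    Nonempty (↥Ysub ≃ₗ[ℍ] (Fin 2 → ℍ)) ∧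
    finrank ℝ ↥YsubP = 5 ∧
    (nuY '' (Ysub : Set (Fin 3 → ℍ)) = {x : ℍ | x.re = 0}) ∧
    ({f ∈ (Ysub : Set (Fin 3 → ℍ)) | nuY f = 0} = (YsubP : Set (Fin 3 → ℍ))) := by
  have hqk : qk ≠ 0 := ne_of_apply_ne (·.imK) (by simp)
  refine ⟨⟨equivFinTwoOfMemIff qi qj (Units.mk0 qk hqk) Ysub fun _ => Iff.rfl⟩,
    finrank_YsubP, image_nuY_Ysub, ?_⟩
  ext f
  simp only [SetLike.mem_coe, mem_YsubP_iff]
  exact and_congr_right nuY_eq_zero_iff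

end
end
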